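/- arXiv:2105.02826 — 2 statements merged into one kernel-verified Lean document; each statement's English description precedes it below -/
import Mathlib

section
/- The vector field X = −z ∂_z − (r cos r sin r)/(r + cos r sin r) ∂_r on ℝ³ satisfies the Lie derivative identity L_X α_OT = g · α_OT, where g(r,θ,z) = −cos r (r cos r + sin r)/(r + cos r sin r). -/
open Real

/-- Coefficient vector `(a_r, a_θ, a_z) = (0, r sin r, cos r)` of
`α_OT = cos r dz + r sin r dθ` in cylindrical coordinates `p = (r, θ, z)` on ℝ³. -/
noncomputable def aOT : ℝ × ℝ × ℝ → ℝ × ℝ × ℝ := fun p =>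
  (0, p.1 * Real.sin p.1, Real.cos p.1)

/-- The contact vector field `X = −z ∂_z − (r cos r sin r)/(r + cos r sin r) ∂_r`
in cylindrical coordinates `(r, θ, z)`. -/
noncomputable def Xot : ℝ × ℝ × ℝ → ℝ × ℝ × ℝ := fun p =>
  (-(p.1 * Real.cos p.1 * Real.sin p.1) / (p.1 + Real.cos p.1 * Real.sin p.1), 0, -p.2.2)

/-- The scaling function `g(r) = −cos r (r cos r + sin r)/(r + cos r sin r)`,
extended continuously by `g(0) = −1` at `r = 0`. -/
noncomputable def gOT (r : ℝ) : ℝ :=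
  if r = 0 then -1
  else -(Real.cos r * (r * Real.cos r + Real.sin r)) / (r + Real.cos r * Real.sin r)

def dot3 (u v : ℝ × ℝ × ℝ) : ℝ := u.1 * v.1 + u.2.1 * v.2.1 + u.2.2 * v.2.2

/-!
The `r`-component of `α_OT` vanishes, so the derivative of `X_r` never enters `L_X α_OT`; all
that is needed is that `X` is differentiable. At `r = 0` this follows from writing
`sin r = r sinc r`, which turns `X_r` into `-r cos r sinc r / (1 + cos r sinc r)`, whose
denominator is positive since `|sinc r| < 1` for `r ≠ 0`. The identity itself is then
algebra together with `sin² r + cos² r = 1`.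
-/

namespace Real

lemma differentiable_sinc : Differentiable ℝ sinc := by
  rw [sinc_eq_dslope]
  intro x
  rcases eq_or_ne x 0 with rfl | hx
  · obtain ⟨p, hp⟩ := analyticAt_sin (x := 0)
    exact hp.has_fpower_series_dslope_fslope.differentiableAt
  · exact (differentiableAt_dslope_of_ne hx).2 differentiableAt_sin

lemma sin_eq_mul_sinc (x : ℝ) : sin x = x * sinc x := by
  rcases eq_or_ne x 0 with rfl | hx
  · simp
  · rw [sinc_of_ne_zero hx]
    field_simp

lemma abs_sinc_lt_one {x : ℝ} (hx : x ≠ 0) : |sinc x| < 1 := by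
  rw [sinc_of_ne_zero hx, abs_div, div_lt_one (abs_pos.2 hx)]
  exact abs_sin_lt_abs hx

lemma one_add_cos_mul_sinc_pos (x : ℝ) : 0 < 1 + cos x * sinc x := by
  rcases eq_or_ne x 0 with rfl | hx
  · norm_num [sinc_zero]
  · have h : |cos x * sinc x| < 1 := by
      rw [abs_mul]
      exact mul_lt_one_of_nonneg_of_lt_one_right (abs_cos_le_one x) (abs_nonneg _)
        (abs_sinc_lt_one hx)
    linarith [(abs_lt.1 h).1]

lemma add_cos_mul_sin_ne_zero {x : ℝ} (hx : x ≠ 0) : x + cos x * sin x ≠ 0 := by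
  have h : x + cos x * sin x = x * (1 + cos x * sinc x) := by
    rw [sin_eq_mul_sinc]
    ring
  rw [h]
  exact mul_ne_zero hx (one_add_cos_mul_sinc_pos x).ne'

end Real

noncomputable def radialXot (r : ℝ) : ℝ :=
  -(r * cos r * sin r) / (r + cos r * sin r)

lemma radialXot_eq_sinc (r : ℝ) :
    radialXot r = -(r * cos r * sinc r) / (1 + cos r * sinc r) := by
  rcases eq_or_ne r 0 with rfl | hr
  · simp [radialXot]
  · have hD := (one_add_cos_mul_sinc_pos r).ne'
    rw [radialXot, sin_eq_mul_sinc]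
    field_simp

lemma differentiable_radialXot : Differentiable ℝ radialXot := by
  have hsinc := differentiable_sinc
  intro r
  rw [funext radialXot_eq_sinc]
  exact DifferentiableAt.div (by fun_prop) (by fun_prop) (one_add_cos_mul_sinc_pos r).ne'

lemma fderiv_aOT_apply (p w : ℝ × ℝ × ℝ) :
    fderiv ℝ aOT p w = (0, (sin p.1 + p.1 * cos p.1) * w.1, -sin p.1 * w.1) := by
  have hθ := ((hasDerivAt_id' p.1).mul (hasDerivAt_sin p.1)).comp_hasFDerivAt p
    (hasFDerivAt_fst (𝕜 := ℝ))
  have hz := (hasDerivAt_cos p.1).comp_hasFDerivAt p (hasFDerivAt_fst (𝕜 := ℝ))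
  have h : HasFDerivAt aOT _ p := (hasFDerivAt_const 0 p).prodMk (hθ.prodMk hz)
  rw [h.fderiv]
  simp

lemma fderiv_Xot_apply (p w : ℝ × ℝ × ℝ) :
    fderiv ℝ Xot p w = (deriv radialXot p.1 * w.1, 0, -w.2.2) := by
  have hr := (differentiable_radialXot p.1).hasDerivAt.comp_hasFDerivAt p
    (hasFDerivAt_fst (𝕜 := ℝ))
  have hz := ((hasFDerivAt_snd (𝕜 := ℝ)).comp p (hasFDerivAt_snd (𝕜 := ℝ))).neg
  have h : HasFDerivAt Xot _ p := hr.prodMk ((hasFDerivAt_const 0 p).prodMk hz)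
  rw [h.fderiv]
  simp

/-- Lie derivative identity `L_X α_OT = g · α_OT`: in coordinates, the Lie derivative of a
1-form `α` along `X` evaluated on a vector `v` is `(Dα(p)[X p])(v) + α(p)(DX(p)[v])`. -/
theorem stmt2 :
    ∀ p v : ℝ × ℝ × ℝ,
      dot3 (fderiv ℝ aOT p (Xot p)) v + dot3 (aOT p) (fderiv ℝ Xot p v)
        = gOT p.1 * dot3 (aOT p) v := by
  intro p v
  simp only [dot3, fderiv_aOT_apply, fderiv_Xot_apply, aOT, Xot, gOT, zero_mul, mul_zero,
    zero_add, add_zero]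
  split_ifs with hr
  · simp [hr]
  · have hD : p.1 + sin p.1 * cos p.1 ≠ 0 := by
      rw [mul_comm]
      exact add_cos_mul_sin_ne_zero hr
    field_simp
    linear_combination (p.1 * cos p.1 * v.2.2) * sin_sq_add_cos_sq p.1
end

section
/- The function g(r) = −cos r (r cos r + sin r)/(r + cos r sin r) is negative on [0, π/2), positive on (π/2, r_M), and negative on (r_M, π+δ] for small δ > 0, where r_M ∈ (π/2, π) is the unique solution of r_M = −tan r_M in that interval. -/
open Real

/-!
For `r > 0` the denominator `r + cos r sin r = r + sin (2r) / 2` is positive because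
`|sin x| < x` for `x > 0`, so the sign of `g` is opposite to that of
`cos r · (r cos r + sin r)`. The factor `cos r` changes sign only at `π/2`, and
`r cos r + sin r` equals `1` at `π/2`, `-π` at `π`, and by hypothesis vanishes only at `r_M`
in between; by the intermediate value theorem it is positive on `(π/2, r_M)` and negative
on `(r_M, π]`. On `(π, 3π/2)` both `cos` and `sin` are negative, so `δ₀ = π/2` works.
-/

lemma IsPreconnected.pos_of_pos_of_ne_zero {X : Type*} [TopologicalSpace X] {s : Set X}
    (hs : IsPreconnected s) {f : X → ℝ} (hf : ContinuousOn f s) (hf0 : ∀ x ∈ s, f x ≠ 0)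
    {a b : X} (ha : a ∈ s) (hb : b ∈ s) (hfa : 0 < f a) : 0 < f b := by
  by_contra! hfb
  obtain ⟨c, hc, hfc⟩ := hs.intermediate_value hb ha hf ⟨hfb, hfa.le⟩
  exact hf0 c hc hfc

lemma add_cos_mul_sin_pos {r : ℝ} (hr : 0 < r) : 0 < r + cos r * sin r := by
  have h := abs_sin_lt_abs (x := 2 * r) (by positivity)
  rw [sin_two_mul, abs_of_pos (by positivity : 0 < 2 * r)] at h
  linarith [neg_abs_le (2 * sin r * cos r)]

lemma gOT_neg {r : ℝ} (hr : 0 < r) (h : 0 < cos r * (r * cos r + sin r)) : gOT r < 0 := by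
  rw [gOT, if_neg hr.ne']
  exact div_neg_of_neg_of_pos (neg_neg_of_pos h) (add_cos_mul_sin_pos hr)

lemma gOT_pos {r : ℝ} (hr : 0 < r) (h : cos r * (r * cos r + sin r) < 0) : 0 < gOT r := by
  rw [gOT, if_neg hr.ne']
  exact div_pos (neg_pos_of_neg h) (add_cos_mul_sin_pos hr)

lemma continuous_mul_cos_add_sin : Continuous fun r : ℝ ↦ r * cos r + sin r := by
  fun_prop

section RootOfMulCosAddSin

variable {rM : ℝ} (hrM : rM ∈ Set.Ioo (π / 2) π)
  (huniq : ∀ r ∈ Set.Ioo (π / 2) π, r * cos r + sin r = 0 → r = rM)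
include hrM huniq

lemma mul_cos_add_sin_pos_of_mem_Ioo {r : ℝ} (hr : r ∈ Set.Ioo (π / 2) rM) :
    0 < r * cos r + sin r := by
  have hne : ∀ x ∈ Set.Ico (π / 2) rM, x * cos x + sin x ≠ 0 := by
    rintro x ⟨hx, hxrM⟩ hx0
    rcases hx.eq_or_lt with rfl | hx
    · simp at hx0
    · exact hxrM.ne (huniq x ⟨hx, hxrM.trans hrM.2⟩ hx0)
  exact isPreconnected_Ico.pos_of_pos_of_ne_zero continuous_mul_cos_add_sin.continuousOn
    hne (Set.left_mem_Ico.2 hrM.1) ⟨hr.1.le, hr.2⟩ (by simp)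

lemma mul_cos_add_sin_neg_of_mem_Ioc {r : ℝ} (hr : r ∈ Set.Ioc rM π) :
    r * cos r + sin r < 0 := by
  have hne : ∀ x ∈ Set.Ioc rM π, -(x * cos x + sin x) ≠ 0 := by
    rintro x ⟨hrMx, hx⟩ hx0
    rcases hx.eq_or_lt with rfl | hx
    · simp [pi_ne_zero] at hx0
    · exact hrMx.ne' (huniq x ⟨hrM.1.trans hrMx, hx⟩ (neg_eq_zero.1 hx0))
  exact neg_pos.1 <| isPreconnected_Ioc.pos_of_pos_of_ne_zero
    continuous_mul_cos_add_sin.neg.continuousOn hne (Set.right_mem_Ioc.2 hrM.2) hr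
    (by simp [pi_pos])

end RootOfMulCosAddSin

theorem stmt3_general (rM : ℝ) (hrM : rM ∈ Set.Ioo (π / 2) π)
    (huniq : ∀ r ∈ Set.Ioo (π / 2) π, r * Real.cos r + Real.sin r = 0 → r = rM) :
    (∀ r ∈ Set.Ico (0 : ℝ) (π / 2), gOT r < 0) ∧
    (∀ r ∈ Set.Ioo (π / 2) rM, 0 < gOT r) ∧
    (∃ δ₀ > (0 : ℝ), ∀ δ ∈ Set.Ioo (0 : ℝ) δ₀, ∀ r ∈ Set.Ioc rM (π + δ), gOT r < 0) := by
  refine ⟨?_, ?_, ⟨π / 2, by positivity, ?_⟩⟩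
  · rintro r ⟨hr0, hr⟩
    rcases hr0.eq_or_lt with rfl | hr0
    · simp [gOT]
    have hcos := cos_pos_of_mem_Ioo ⟨by linarith [pi_pos], hr⟩
    have hsin := sin_pos_of_pos_of_lt_pi hr0 (by linarith [pi_pos])
    exact gOT_neg hr0 (by positivity)
  · rintro r hr
    have hcos := cos_neg_of_pi_div_two_lt_of_lt hr.1 (by linarith [hr.2, hrM.2, pi_pos])
    exact gOT_pos (by linarith [hr.1, pi_pos])
      (mul_neg_of_neg_of_pos hcos (mul_cos_add_sin_pos_of_mem_Ioo hrM huniq hr))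
  · rintro δ ⟨-, hδ⟩ r ⟨hrMr, hr⟩
    have hr0 : 0 < r := by linarith [hrM.1, pi_pos]
    have hcos := cos_neg_of_pi_div_two_lt_of_lt (hrM.1.trans hrMr) (by linarith)
    refine gOT_neg hr0 (mul_pos_of_neg_of_neg hcos ?_)
    rcases le_or_gt r π with hrπ | hπr
    · exact mul_cos_add_sin_neg_of_mem_Ioc hrM huniq ⟨hrMr, hrπ⟩
    · have hsin : sin r < 0 := by
        rw [← neg_pos, ← sin_sub_pi]
        exact sin_pos_of_pos_of_lt_pi (by linarith) (by linarith [pi_pos])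
      exact add_neg (mul_neg_of_pos_of_neg hr0 hcos) hsin

/-- `g` is negative on `[0, π/2)`, positive on `(π/2, r_M)`, and negative on
`(r_M, π + δ]` for all small `δ > 0`, where `r_M ∈ (π/2, π)` is the unique solution
of `r_M = −tan r_M` there, i.e. the root of `r cos r + sin r`. -/
theorem stmt3 (rM : ℝ) (hrM : rM ∈ Set.Ioo (π / 2) π)
    (hroot : rM * Real.cos rM + Real.sin rM = 0)
    (huniq : ∀ r ∈ Set.Ioo (π / 2) π, r * Real.cos r + Real.sin r = 0 → r = rM) :
    (∀ r ∈ Set.Ico (0 : ℝ) (π / 2), gOT r < 0) ∧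
    (∀ r ∈ Set.Ioo (π / 2) rM, 0 < gOT r) ∧
    (∃ δ₀ > (0 : ℝ), ∀ δ ∈ Set.Ioo (0 : ℝ) δ₀, ∀ r ∈ Set.Ioc rM (π + δ), gOT r < 0) :=
  stmt3_general rM hrM huniq
end
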